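/- arXiv:2304.05562 — 4 statements merged into one kernel-verified Lean document; each statement's English description precedes it below -/
import Mathlib

section
/- Lemma 1.1, existential form. Let k be an algebraically closed field, V a finite-dimensional k-vector space, n a natural number, and A : (Fin n → kˣ) →* GL(V) a rational representation of the torus T = (Fin n → kˣ) on V. Let σ be a linear automorphism of V which is diagonalizable and satisfies σ ∘ A(t) = A(t) ∘ σ for all t ∈ T. Then there exists z ∈ T such that for every k-subspace V' of V with (σ ∘ A(z))(V') = V', one has σ(V') = V' and A(t)(V') = V' for all t ∈ T. -/
open Module

lemma eig_comp_mem {k V : Type*} [Field k] [AddCommGroup V] [Module k V]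
    (f : Module.End k V) (V' : Submodule k V) (hV' : ∀ v ∈ V', f v ∈ V') :
    ∀ (s : Finset k) (d : k → V), (∀ c, d c ∈ Module.End.eigenspace f c) →
      (∑ c ∈ s, d c) ∈ V' → ∀ c ∈ s, d c ∈ V' := by
  intro s
  induction s using Finset.cons_induction with
  | empty => simp
  | cons c₀ s hc₀ ih =>
    intro d hd hsum c hc
    rw [Finset.sum_cons] at hsum
    set v := ∑ c ∈ s, d c with hv
    have hw : f (d c₀ + v) - c₀ • (d c₀ + v) ∈ V' :=
      Submodule.sub_mem _ (hV' _ hsum) (Submodule.smul_mem _ _ hsum)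
    have hx : ∀ x, f (d x) = x • d x := fun x => Module.End.mem_eigenspace_iff.mp (hd x)
    have hkey : f (d c₀ + v) - c₀ • (d c₀ + v) = ∑ c ∈ s, (c - c₀) • d c := by
      have h1 : f (d c₀ + v) - c₀ • (d c₀ + v)
          = (∑ c ∈ s, c • d c) - (∑ c ∈ s, c₀ • d c) := by
        simp only [map_add, hx c₀, hv, map_sum, smul_add, Finset.smul_sum]
        rw [Finset.sum_congr rfl fun x _ => hx x]
        abel
      rw [h1, ← Finset.sum_sub_distrib]
      exact Finset.sum_congr rfl fun x _ => (sub_smul x c₀ (d x)).symm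
    rw [hkey] at hw
    have ihapp := ih (fun c => (c - c₀) • d c) (fun c => Submodule.smul_mem _ _ (hd c)) hw
    have hmem : ∀ x ∈ s, d x ∈ V' := by
      intro x hxs
      have hx0 : x - c₀ ≠ 0 := sub_ne_zero.mpr (by rintro rfl; exact hc₀ hxs)
      have h2 := Submodule.smul_mem _ (x - c₀)⁻¹ (ihapp x hxs)
      rwa [smul_smul, inv_mul_cancel₀ hx0, one_smul] at h2
    rcases Finset.mem_cons.mp hc with rfl | hcs
    · have hvV : v ∈ V' := Submodule.sum_mem _ hmem
      simpa using Submodule.sub_mem _ hsum hvV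
    · exact hmem c hcs

/-- An invariant subspace of a diagonalizable endomorphism decomposes along eigenspaces. -/
lemma invariant_decomp {k V : Type*} [Field k] [AddCommGroup V] [Module k V]
    (f : Module.End k V) (hf : (⨆ c : k, Module.End.eigenspace f c) = ⊤)
    (V' : Submodule k V) (hV' : ∀ v ∈ V', f v ∈ V') :
    V' = ⨆ c : k, (V' ⊓ Module.End.eigenspace f c) := by
  refine le_antisymm ?_ (iSup_le fun c => inf_le_left)
  intro v hv
  have hv' : v ∈ ⨆ c : k, Module.End.eigenspace f c := by rw [hf]; trivial
  rw [Submodule.mem_iSup_iff_exists_finsupp] at hv'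
  obtain ⟨d, hd, hdsum⟩ := hv'
  have hdsum' : ∑ c ∈ d.support, d c = v := hdsum
  have hsum : (∑ c ∈ d.support, d c) ∈ V' := by rwa [hdsum']
  have hall := eig_comp_mem f V' hV' d.support d hd hsum
  rw [← hdsum']
  exact Submodule.sum_mem _ fun c hc =>
    Submodule.mem_iSup_of_mem c (Submodule.mem_inf.mpr ⟨hall c hc, hd c⟩)

lemma digits_zero (N : ℤ) (hN : 0 < N) :
    ∀ (m : ℕ) (d : ℕ → ℤ), (∀ i, |d i| < N) →
      (∑ i ∈ Finset.range m, d i * N ^ i) = 0 → ∀ i < m, d i = 0 := by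
  intro m
  induction m with
  | zero => intro d _ _ i hi; omega
  | succ m ih =>
    intro d hd hsum i hi
    rw [Finset.sum_range_succ'] at hsum
    -- ∑ i in range m, d (i+1) * N^(i+1) + d 0 * N^0 = 0
    have hfac : ∀ j : ℕ, d (j + 1) * N ^ (j + 1) = N * (d (j + 1) * N ^ j) := by
      intro j; ring
    rw [Finset.sum_congr rfl fun j _ => hfac j, ← Finset.mul_sum] at hsum
    have hdvd : N ∣ d 0 := ⟨-(∑ j ∈ Finset.range m, d (j + 1) * N ^ j), by linarith [hsum]⟩
    have hd0 : d 0 = 0 := by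
      rcases hdvd with ⟨c, hc⟩
      have := hd 0
      rcases lt_trichotomy c 0 with h | h | h
      · nlinarith [abs_lt.mp this]
      · simp [hc, h]
      · nlinarith [abs_lt.mp this]
    rcases Nat.eq_zero_or_pos i with rfl | hipos
    · exact hd0
    · have hsum' : (∑ j ∈ Finset.range m, d (j + 1) * N ^ j) = 0 := by
        rw [hd0] at hsum
        simp at hsum
        rcases hsum with h | h
        · omega
        · exact h
      obtain ⟨j, rfl⟩ : ∃ j, i = j + 1 := ⟨i - 1, by omega⟩
      exact ih (fun j => d (j + 1)) (fun j => hd _) hsum' j (by omega)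

lemma zpow_sum'' {G : Type*} [CommGroup G] (a : G) {ι : Type*} (s : Finset ι) (f : ι → ℤ) :
    a ^ (∑ i ∈ s, f i) = ∏ i ∈ s, a ^ f i := by
  induction s using Finset.cons_induction with
  | empty => simp
  | cons i s hi ih => rw [Finset.sum_cons, Finset.prod_cons, zpow_add, ih]

/-- If `g` acts on `U` by the nonzero scalar `c`, then `g` maps `U` onto `U`. -/
lemma map_eq_of_scalar {k V : Type*} [Field k] [AddCommGroup V] [Module k V]
    (g : Module.End k V) (U : Submodule k V) (c : k) (hc : c ≠ 0)
    (hg : ∀ v ∈ U, g v = c • v) : Submodule.map g U = U := by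
  apply le_antisymm
  · rintro x ⟨v, hv, rfl⟩
    rw [hg v hv]; exact U.smul_mem _ hv
  · intro x hx
    refine ⟨c⁻¹ • x, U.smul_mem _ hx, ?_⟩
    rw [map_smul, hg x hx, smul_smul, inv_mul_cancel₀ hc, one_smul]

open Polynomial

lemma units_infinite {k : Type*} [Field k] [Infinite k] : Infinite kˣ := by
  have h1 : ({0}ᶜ : Set k).Infinite := Set.Finite.infinite_compl (Set.finite_singleton 0)
  have h2 : Infinite ({0}ᶜ : Set k) := h1.to_subtype
  exact Infinite.of_injective
    (fun x : ({0}ᶜ : Set k) => Units.mk0 x.1 (fun h => x.2 (by simp [h])))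
    (fun a b hab => Subtype.ext (by simpa using congrArg Units.val hab))

lemma finite_bad {k : Type*} [Field k] (e : ℤ) (he : e ≠ 0) (lam : kˣ) :
    Set.Finite {a : kˣ | a ^ e = lam} := by
  have hm : 0 < e.natAbs := Int.natAbs_pos.mpr he
  have hfin : Set.Finite {x : k | x ^ e.natAbs = (lam : k) ∨ x ^ e.natAbs = ((lam⁻¹ : kˣ) : k)} := by
    have h1 : Set.Finite {x : k | IsRoot (X ^ e.natAbs - C (lam : k)) x} :=
      finite_setOf_isRoot (X_pow_sub_C_ne_zero hm _)
    have h2 : Set.Finite {x : k | IsRoot (X ^ e.natAbs - C ((lam⁻¹ : kˣ) : k)) x} :=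
      finite_setOf_isRoot (X_pow_sub_C_ne_zero hm _)
    refine Set.Finite.subset (h1.union h2) ?_
    rintro x (hx | hx)
    · left; simp [IsRoot.def, hx]
    · right; simp [IsRoot.def, hx]
  have hpre := Set.Finite.preimage_embedding ⟨fun x : kˣ => (x : k), fun _ _ h => Units.ext h⟩ hfin
  refine hpre.subset ?_
  rintro a ha
  simp only [Set.mem_preimage, Function.Embedding.coeFn_mk, Set.mem_setOf_eq]
  rcases Int.natAbs_eq e with h | h
  · left
    have h2 : a ^ (e.natAbs : ℤ) = lam := by rw [← h]; exact ha
    rw [zpow_natCast] at h2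
    exact (by exact_mod_cast congrArg (Units.val) h2 : (a : k) ^ e.natAbs = (lam : k))
  · right
    have h2 : a ^ (-(e.natAbs : ℤ)) = lam := by rw [← h]; exact ha
    rw [zpow_neg, zpow_natCast] at h2
    have h3 : a ^ e.natAbs = lam⁻¹ := by rw [← inv_inv (a ^ e.natAbs), h2]
    exact (by exact_mod_cast congrArg (Units.val) h3 : (a : k) ^ e.natAbs = ((lam⁻¹ : kˣ) : k))

/-- choose a unit avoiding finitely many constraints `a ^ e ≠ λ` with `e ≠ 0`. -/
lemma exists_good_unit {k : Type*} [Field k] [Infinite k] {ι : Type*} (Q : Finset ι)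
    (e : ι → ℤ) (lam : ι → kˣ) (he : ∀ i ∈ Q, e i ≠ 0) :
    ∃ a : kˣ, ∀ i ∈ Q, a ^ (e i) ≠ lam i := by
  have : Infinite kˣ := units_infinite
  have hbad : Set.Finite (⋃ i ∈ Q, {a : kˣ | a ^ e i = lam i}) :=
    Set.Finite.biUnion Q.finite_toSet fun i hi => finite_bad (e i) (he i hi) (lam i)
  obtain ⟨a, ha⟩ := hbad.infinite_compl.nonempty
  exact ⟨a, fun i hi hcon => ha (Set.mem_biUnion hi hcon)⟩



/-- The weight space of a torus representation `A : (Fin n → kˣ) →* (Module.End k V)ˣ`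
for the character `χ : Fin n → ℤ`, i.e. the set of `v` with
`A t v = (∏ i, (t i) ^ (χ i)) • v` for all `t`. -/
def weightSpace {k V : Type*} [Field k] [AddCommGroup V] [Module k V] {n : ℕ}
    (A : (Fin n → kˣ) →* (Module.End k V)ˣ) (χ : Fin n → ℤ) : Submodule k V :=
  ⨅ t : Fin n → kˣ,
    Module.End.eigenspace (A t : Module.End k V) ((∏ i, (t i) ^ (χ i) : kˣ) : k)

/-- Lemma 1.1, existential form: for a rational torus representation `A` and a
diagonalizable automorphism `σ` commuting with the torus action, there exists `z` in the
torus such that any subspace invariant under `σ ∘ A z` is invariant under `σ` and under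
the whole torus action. -/
theorem rigid_strata_lemma_1_1_existential
    {k : Type*} [Field k] [IsAlgClosed k]
    {V : Type*} [AddCommGroup V] [Module k V] [FiniteDimensional k V]
    (n : ℕ) (A : (Fin n → kˣ) →* (Module.End k V)ˣ)
    (hA : (⨆ χ : Fin n → ℤ, weightSpace A χ) = ⊤)
    (σ : (Module.End k V)ˣ)
    (hσ : (⨆ c : k, Module.End.eigenspace (σ : Module.End k V) c) = ⊤)
    (hcomm : ∀ t : Fin n → kˣ,
      (σ : Module.End k V) * (A t : Module.End k V)
        = (A t : Module.End k V) * (σ : Module.End k V)) :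
    ∃ z : Fin n → kˣ, ∀ V' : Submodule k V,
      Submodule.map ((σ : Module.End k V) * (A z : Module.End k V)) V' = V' →
        Submodule.map (σ : Module.End k V) V' = V' ∧
        ∀ t : Fin n → kˣ, Submodule.map (A t : Module.End k V) V' = V' := by
  classical
  set σe : Module.End k V := (σ : Module.End k V) with hσe
  -- membership in weight spaces
  have hmemW : ∀ (χ : Fin n → ℤ) (v : V), v ∈ weightSpace A χ ↔
      ∀ t, (A t : Module.End k V) v = ((∏ i, (t i) ^ (χ i) : kˣ) : k) • v := by
    intro χ v
    simp [weightSpace, Submodule.mem_iInf, Module.End.mem_eigenspace_iff]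
  -- σ-action commutes, weight spaces are σ-invariant
  have hinv : ∀ χ : Fin n → ℤ, ∀ v ∈ weightSpace A χ, σe v ∈ weightSpace A χ := by
    intro χ v hv
    rw [hmemW] at hv ⊢
    intro t
    have h1 : (A t : Module.End k V) (σe v) = σe ((A t : Module.End k V) v) := by
      have := hcomm t
      calc (A t : Module.End k V) (σe v) = ((A t : Module.End k V) * σe) v := rfl
        _ = (σe * (A t : Module.End k V)) v := by rw [this]
        _ = σe ((A t : Module.End k V) v) := rfl
    rw [h1, hv t, map_smul]
  -- the simultaneous eigenspaces
  set W : k × (Fin n → ℤ) → Submodule k V :=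
    fun p => Module.End.eigenspace σe p.1 ⊓ weightSpace A p.2 with hW
  have hWtop : (⊤ : Submodule k V) ≤ ⨆ p : k × (Fin n → ℤ), W p := by
    rw [← hA]
    refine iSup_le fun χ => ?_
    have hdec := invariant_decomp σe hσ (weightSpace A χ) (hinv χ)
    rw [hdec]
    refine iSup_le fun c => ?_
    exact le_trans (le_of_eq (inf_comm _ _)) (le_iSup W (c, χ))
  -- compactness: finitely many relevant pairs
  obtain ⟨P₀, hP₀⟩ := (CompleteLattice.IsCompactElement.exists_finset_of_le_iSup _
    ((Submodule.fg_iff_compact _).mp (Module.finite_def.mp inferInstance)) W hWtop)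
  set P : Finset (k × (Fin n → ℤ)) := P₀.filter (fun p => W p ≠ ⊥) with hPdef
  have hPtop : (⊤ : Submodule k V) ≤ ⨆ p ∈ P, W p := by
    refine le_trans hP₀ (iSup₂_le fun p hp => ?_)
    by_cases h : W p = ⊥
    · rw [h]; exact bot_le
    · exact le_iSup₂ (f := fun p _ => W p) p (Finset.mem_filter.mpr ⟨hp, h⟩)
  -- facts about pairs in P
  have hc0 : ∀ p ∈ P, p.1 ≠ 0 := by
    intro p hp
    have hWne : W p ≠ ⊥ := (Finset.mem_filter.mp hp).2
    obtain ⟨v, hv, hv0⟩ := Submodule.ne_bot_iff _ |>.mp hWne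
    have hσv : σe v = p.1 • v :=
      Module.End.mem_eigenspace_iff.mp (Submodule.mem_inf.mp hv).1
    intro hp1
    apply hv0
    rw [hp1] at hσv
    have : ((σ⁻¹ : (Module.End k V)ˣ) : Module.End k V) (σe v) = v := by
      rw [show ((σ⁻¹ : (Module.End k V)ˣ) : Module.End k V) (σe v)
        = (((σ⁻¹ : (Module.End k V)ˣ) : Module.End k V) * σe) v from rfl,
        ← Units.val_mul, inv_mul_cancel σ]; rfl
    rw [hσv, zero_smul, map_zero] at this
    exact this.symm
  -- bound on the exponents appearing in P
  set B : ℕ := P.sup (fun p => Finset.univ.sup fun i : Fin n => (p.2 i).natAbs) with hB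
  set N : ℤ := ((2 * B + 1 : ℕ) : ℤ) with hN
  have hNpos : 0 < N := by positivity
  have hbound : ∀ p ∈ P, ∀ i : Fin n, (p.2 i).natAbs ≤ B := by
    intro p hp i
    exact le_trans (Finset.le_sup (f := fun i : Fin n => (p.2 i).natAbs) (Finset.mem_univ i))
      (Finset.le_sup (f := fun p => Finset.univ.sup fun i : Fin n => (p.2 i).natAbs) hp)
  -- the exponent associated to a pair of pairs
  set E : (Fin n → ℤ) → ℤ := fun χ => ∑ i : Fin n, χ i * N ^ (i : ℕ) with hE
  set Q : Finset ((k × (Fin n → ℤ)) × (k × (Fin n → ℤ))) :=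
    (P ×ˢ P).filter (fun pq => pq.1.2 ≠ pq.2.2) with hQ
  set e : ((k × (Fin n → ℤ)) × (k × (Fin n → ℤ))) → ℤ :=
    fun pq => E pq.1.2 - E pq.2.2 with he
  set lam : ((k × (Fin n → ℤ)) × (k × (Fin n → ℤ))) → kˣ := fun pq =>
    if h : pq.2.1 ≠ 0 ∧ pq.1.1 ≠ 0 then Units.mk0 (pq.2.1 / pq.1.1) (div_ne_zero h.1 h.2)
    else 1 with hlam
  have heQ : ∀ pq ∈ Q, e pq ≠ 0 := by
    intro pq hpq hcon
    rw [hQ, Finset.mem_filter, Finset.mem_product] at hpq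
    obtain ⟨⟨hp, hq⟩, hne⟩ := hpq
    apply hne
    -- digits argument
    have hdig : ∀ i : Fin n, pq.1.2 i - pq.2.2 i = 0 := by
      set d : ℕ → ℤ := fun j => if h : j < n then pq.1.2 ⟨j, h⟩ - pq.2.2 ⟨j, h⟩ else 0 with hd
      have hsum : (∑ j ∈ Finset.range n, d j * N ^ j) = 0 := by
        rw [← Fin.sum_univ_eq_sum_range (fun j => d j * N ^ j) n]
        have : ∀ i : Fin n, d (i : ℕ) * N ^ (i : ℕ)
            = pq.1.2 i * N ^ (i : ℕ) - pq.2.2 i * N ^ (i : ℕ) := by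
          intro i; simp only [hd, i.isLt, dif_pos, Fin.eta]; ring
        rw [Finset.sum_congr rfl fun i _ => this i, Finset.sum_sub_distrib]
        rw [he] at hcon
        simpa [hE] using sub_eq_zero.mpr (sub_eq_zero.mp hcon)
      have hdb : ∀ j, |d j| < N := by
        intro j
        rw [hd]
        by_cases h : j < n
        · simp only [dif_pos h]
          have h1 := hbound _ hp ⟨j, h⟩
          have h2 := hbound _ hq ⟨j, h⟩
          rw [hN]
          rw [abs_sub_lt_iff]
          constructor <;> [skip; skip] <;>
          · have e1 : |pq.1.2 ⟨j, h⟩| ≤ (B : ℤ) := by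
              rw [Int.abs_eq_natAbs]; exact_mod_cast h1
            have e2 : |pq.2.2 ⟨j, h⟩| ≤ (B : ℤ) := by
              rw [Int.abs_eq_natAbs]; exact_mod_cast h2
            have := abs_le.mp e1; have := abs_le.mp e2
            push_cast; omega
        · simp only [dif_neg h]; exact hNpos
      intro i
      have := digits_zero N hNpos n d hdb hsum (i : ℕ) i.isLt
      rw [hd] at this
      simpa [i.isLt] using this
    funext i
    have := hdig i
    omega
  -- choose the good unit and define z
  obtain ⟨a, ha⟩ := exists_good_unit Q e lam heQ
  set z : Fin n → kˣ := fun i => a ^ ((N : ℤ) ^ (i : ℕ)) with hz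
  refine ⟨z, ?_⟩
  -- value of characters at z
  have hχz : ∀ χ : Fin n → ℤ, (∏ i, (z i) ^ (χ i) : kˣ) = a ^ E χ := by
    intro χ
    rw [hE, zpow_sum'']
    refine Finset.prod_congr rfl fun i _ => ?_
    rw [hz, ← zpow_mul, mul_comm]
  -- the operator and eigenvalue function
  set f : Module.End k V := σe * ((A z : (Module.End k V)ˣ) : Module.End k V) with hf
  set μ : k × (Fin n → ℤ) → k := fun p => p.1 * ((a ^ E p.2 : kˣ) : k) with hμ
  have hdist : ∀ p ∈ P, ∀ q ∈ P, μ p = μ q → p = q := by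
    intro p hp q hq hμeq
    have cp1 := hc0 p hp
    have cq1 := hc0 q hq
    by_cases hχ : p.2 = q.2
    · have hu : ((a ^ E p.2 : kˣ) : k) ≠ 0 := Units.ne_zero _
      rw [hμ] at hμeq
      simp only [hχ] at hμeq
      have h1 : p.1 = q.1 := mul_right_cancel₀ (Units.ne_zero _) hμeq
      exact Prod.ext h1 hχ
    · exfalso
      have hmemQ : (p, q) ∈ Q := by
        rw [hQ, Finset.mem_filter, Finset.mem_product]
        exact ⟨⟨hp, hq⟩, hχ⟩
      apply ha (p, q) hmemQ
      apply Units.ext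
      have hval0 : (a ^ e (p, q) : kˣ) = a ^ E p.2 / a ^ E q.2 := by
        simp only [he]; rw [zpow_sub]; rfl
      rw [hval0, Units.val_div_eq_div_val, hlam]
      simp only [dif_pos (And.intro cq1 cp1)]
      rw [Units.val_mk0]
      rw [div_eq_div_iff (Units.ne_zero _) cp1]
      rw [hμ] at hμeq
      linear_combination hμeq
  have hWeig : ∀ p ∈ P, W p ≤ Module.End.eigenspace f (μ p) := by
    intro p hp v hv
    obtain ⟨hv1, hv2⟩ := Submodule.mem_inf.mp hv
    rw [Module.End.mem_eigenspace_iff]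
    have hAz : (A z : Module.End k V) v = ((a ^ E p.2 : kˣ) : k) • v := by
      have := (hmemW p.2 v).mp hv2 z
      rwa [hχz p.2] at this
    have hσv : σe v = p.1 • v := Module.End.mem_eigenspace_iff.mp hv1
    calc f v = σe ((A z : Module.End k V) v) := rfl
      _ = σe (((a ^ E p.2 : kˣ) : k) • v) := by rw [hAz]
      _ = ((a ^ E p.2 : kˣ) : k) • σe v := by rw [map_smul]
      _ = ((a ^ E p.2 : kˣ) : k) • (p.1 • v) := by rw [hσv]
      _ = μ p • v := by rw [smul_smul, hμ, mul_comm]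
  have htopf : (⨆ c : k, Module.End.eigenspace f c) = ⊤ := by
    refine le_antisymm le_top (le_trans hPtop (iSup₂_le fun p hp => ?_))
    exact le_trans (hWeig p hp) (le_iSup _ (μ p))
  have hind := Module.End.eigenspaces_iSupIndep f
  -- the main argument
  intro V' hVmap
  have hV'inv : ∀ v ∈ V', f v ∈ V' := by
    intro v hv
    rw [← hVmap]
    exact Submodule.mem_map_of_mem hv
  have hdecomp := invariant_decomp f htopf V' hV'inv
  have hpieces : ∀ ν : k,
      Submodule.map σe (V' ⊓ Module.End.eigenspace f ν) = V' ⊓ Module.End.eigenspace f ν ∧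
      ∀ t : Fin n → kˣ, Submodule.map (A t : Module.End k V) (V' ⊓ Module.End.eigenspace f ν)
        = V' ⊓ Module.End.eigenspace f ν := by
    intro ν
    by_cases hex : ∃ p ∈ P, μ p = ν
    · obtain ⟨p, hp, hμp⟩ := hex
      have hWpE : W p ≤ Module.End.eigenspace f ν := by rw [← hμp]; exact hWeig p hp
      have hXle : (⨆ q ∈ P.erase p, W q)
          ≤ ⨆ c, ⨆ (_ : c ≠ ν), Module.End.eigenspace f c := by
        refine iSup₂_le fun q hq => ?_
        have hqP : q ∈ P := Finset.mem_of_mem_erase hq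
        have hqne : q ≠ p := Finset.ne_of_mem_erase hq
        have hμq : μ q ≠ ν := fun hcon => hqne (hdist q hqP p hp (by rw [hcon, hμp]))
        exact le_trans (hWeig q hqP)
          (le_iSup₂ (f := fun c _ => Module.End.eigenspace f c) (μ q) hμq)
      have hsplit : W p ⊔ (⨆ q ∈ P.erase p, W q) = ⊤ := by
        refine le_antisymm le_top (le_trans hPtop (iSup₂_le fun q hq => ?_))
        by_cases hqp : q = p
        · rw [hqp]; exact le_sup_left
        · exact le_trans
            (le_iSup₂ (f := fun q (_ : q ∈ P.erase p) => W q) q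
              (Finset.mem_erase.mpr ⟨hqp, hq⟩)) le_sup_right
      have hEeq : Module.End.eigenspace f ν ≤ W p := by
        have h1 : (W p ⊔ (⨆ q ∈ P.erase p, W q)) ⊓ Module.End.eigenspace f ν
            = Module.End.eigenspace f ν := by rw [hsplit, top_inf_eq]
        rw [← h1, sup_inf_assoc_of_le _ hWpE]
        have h2 : (⨆ q ∈ P.erase p, W q) ⊓ Module.End.eigenspace f ν = ⊥ := by
          rw [inf_comm]
          exact disjoint_iff.mp ((hind ν).mono_right hXle)
        rw [h2, sup_bot_eq]
      have hmemWp : ∀ v ∈ V' ⊓ Module.End.eigenspace f ν, v ∈ W p :=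
        fun v hv => hEeq (Submodule.mem_inf.mp hv).2
      constructor
      · refine map_eq_of_scalar σe _ p.1 (hc0 p hp) fun v hv => ?_
        exact Module.End.mem_eigenspace_iff.mp (Submodule.mem_inf.mp (hmemWp v hv)).1
      · intro t
        refine map_eq_of_scalar _ _ ((∏ i, (t i) ^ (p.2 i) : kˣ) : k)
          (Units.ne_zero _) fun v hv => ?_
        exact (hmemW p.2 v).mp (Submodule.mem_inf.mp (hmemWp v hv)).2 t
    · push_neg at hex
      have hbot : Module.End.eigenspace f ν = ⊥ := by
        have h1 : Module.End.eigenspace f ν ≤ ⨆ q ∈ P, W q :=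
          le_trans le_top hPtop
        have h2 : (⨆ q ∈ P, W q) ≤ ⨆ c, ⨆ (_ : c ≠ ν), Module.End.eigenspace f c := by
          refine iSup₂_le fun q hq => ?_
          exact le_trans (hWeig q hq)
            (le_iSup₂ (f := fun c _ => Module.End.eigenspace f c) (μ q) (hex q hq))
        exact (hind ν).eq_bot_of_le (le_trans h1 h2)
      rw [hbot, inf_bot_eq]
      simp [Submodule.map_bot]
  constructor
  · conv_lhs => rw [hdecomp]
    rw [Submodule.map_iSup]
    rw [iSup_congr fun ν => (hpieces ν).1]
    exact hdecomp.symm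
  · intro t
    conv_lhs => rw [hdecomp]
    rw [Submodule.map_iSup]
    rw [iSup_congr fun ν => (hpieces ν).2 t]
    exact hdecomp.symm
end

section
/- Lemma 1.1, genericity form. Let k be an algebraically closed field, V a finite-dimensional k-vector space, n a natural number, A : (Fin n → kˣ) →* GL(V) a rational representation of the torus T = (Fin n → kˣ), and σ a diagonalizable linear automorphism of V with σ ∘ A(t) = A(t) ∘ σ for all t ∈ T. Then there exists a finite set F of pairs (m, d) with m : Fin n → ℤ nonzero and d ∈ kˣ such that every z ∈ T satisfying ∏ i, (z i)^(m i) ≠ d for all (m, d) ∈ F has the following property: for every k-subspace V' of V with (σ ∘ A(z))(V') = V', one has σ(V') = V' and A(t)(V') = V' for all t ∈ T. (In the paper, the set of such z is the open dense set 𝒪, the complement of finitely many codimension-1 subvarieties of T.) -/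
section helpers

variable {k V : Type*} [Field k] [AddCommGroup V] [Module k V]

/-- A submodule on which an endomorphism acts as a nonzero scalar is mapped onto itself. -/
lemma map_eq_self_of_scalar (f : Module.End k V) (U : Submodule k V) (c : k) (hc : c ≠ 0)
    (h : ∀ x ∈ U, f x = c • x) : Submodule.map f U = U := by
  apply le_antisymm
  · rintro y ⟨x, hx, rfl⟩
    rw [h x hx]
    exact U.smul_mem c hx
  · intro x hx
    refine ⟨c⁻¹ • x, U.smul_mem _ hx, ?_⟩
    rw [map_smul, h x hx, smul_smul, inv_mul_cancel₀ hc, one_smul]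

/-- Key decomposition lemma: if `V'` is invariant under `f` and `x ∈ V'` lies in the span of
a family of "eigenpieces" `W i` on which `f` acts by pairwise distinct scalars `μ i`, then
`x` lies in the span of the pieces `V' ⊓ W i`. -/
lemma mem_iSup_inf_of_invariant {ι : Type*} (f : Module.End k V) (W : ι → Submodule k V)
    (μ : ι → k) (hμ : Function.Injective μ)
    (hW : ∀ i, ∀ x ∈ W i, f x = μ i • x)
    (V' : Submodule k V) (hV' : ∀ x ∈ V', f x ∈ V') :
    ∀ x ∈ V', x ∈ (⨆ i, W i) → x ∈ ⨆ i, (V' ⊓ W i) := by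
  classical
  have aux : ∀ s : Finset ι, ∀ v : ι → V, (∀ i, v i ∈ W i) →
      (∑ i ∈ s, v i) ∈ V' → ∀ i ∈ s, v i ∈ V' := by
    intro s
    induction s using Finset.induction_on with
    | empty => intro v _ _ i hi; simp at hi
    | @insert a s ha ih =>
      intro v hv hsum i hi
      set x := ∑ j ∈ insert a s, v j with hx
      have hws : (∑ j ∈ s, (μ j - μ a) • v j) ∈ V' := by
        have h1 : f x - μ a • x = ∑ j ∈ insert a s, (μ j - μ a) • v j := by
          rw [hx, map_sum, Finset.smul_sum, ← Finset.sum_sub_distrib]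
          refine Finset.sum_congr rfl fun j _ => ?_
          rw [hW j (v j) (hv j), sub_smul]
        have h2 : ∑ j ∈ insert a s, (μ j - μ a) • v j = ∑ j ∈ s, (μ j - μ a) • v j := by
          rw [Finset.sum_insert ha, sub_self, zero_smul, zero_add]
        rw [← h2, ← h1]
        exact V'.sub_mem (hV' x hsum) (V'.smul_mem _ hsum)
      have hs' : ∀ j ∈ s, v j ∈ V' := by
        intro j hj
        have hne : μ j - μ a ≠ 0 := by
          refine sub_ne_zero_of_ne (fun h => ha ?_)
          rwa [hμ h] at hj
        have := ih (fun j => (μ j - μ a) • v j) (fun j => (W j).smul_mem _ (hv j)) hws j hj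
        have h3 : v j = (μ j - μ a)⁻¹ • ((μ j - μ a) • v j) := by
          rw [smul_smul, inv_mul_cancel₀ hne, one_smul]
        rw [h3]; exact V'.smul_mem _ this
      rcases Finset.mem_insert.mp hi with rfl | hi'
      · have : v i = x - ∑ j ∈ s, v j := by rw [hx, Finset.sum_insert ha]; abel
        rw [this]
        exact V'.sub_mem hsum (V'.sum_mem fun j hj => hs' j hj)
      · exact hs' i hi'
  intro x hxV hxW
  obtain ⟨d, hd, rfl⟩ := (Submodule.mem_iSup_iff_exists_finsupp _ _).mp hxW
  have hsum : (∑ i ∈ d.support, d i) ∈ V' := by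
    exact hxV
  have hmem : ∀ i, d i ∈ V' := by
    intro i
    by_cases hi : i ∈ d.support
    · exact aux d.support (fun j => d j) hd hsum i hi
    · rw [Finsupp.notMem_support_iff.mp hi]; exact V'.zero_mem
  show d.sum (fun _ v => v) ∈ _
  rw [Finsupp.sum]
  exact Submodule.sum_mem _ fun i _ =>
    Submodule.mem_iSup_of_mem i (Submodule.mem_inf.mpr ⟨hmem i, hd i⟩)

end helpers


section helpers2

variable {k : Type*} [Field k]

lemma exists_unit_notMem [Infinite k] (B : Set kˣ) (hB : B.Finite) : ∃ u : kˣ, u ∉ B := by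
  have h1 : ((Units.val '' B) ∪ {0} : Set k).Finite := (hB.image _).union (Set.finite_singleton 0)
  obtain ⟨x, hx⟩ := h1.infinite_compl.nonempty
  simp only [Set.mem_compl_iff, Set.mem_union, Set.mem_singleton_iff, not_or] at hx
  refine ⟨Units.mk0 x hx.2, fun hmem => hx.1 ⟨_, hmem, rfl⟩⟩

lemma finite_zpow_eq_one (d : ℤ) (hd : d ≠ 0) : {u : kˣ | u ^ d = 1}.Finite := by
  have hroot : {x : k | (Polynomial.X ^ d.natAbs - Polynomial.C 1 : Polynomial k).IsRoot x}.Finite := by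
    apply Polynomial.finite_setOf_isRoot
    apply Polynomial.X_pow_sub_C_ne_zero
    exact Int.natAbs_pos.mpr hd
  apply Set.Finite.of_finite_image (f := Units.val) _ (Units.val_injective.injOn)
  apply hroot.subset
  rintro x ⟨u, hu, rfl⟩
  have hnat : u ^ d.natAbs = 1 := by
    rcases Int.natAbs_eq d with h | h
    · rw [← zpow_natCast, ← h]; exact hu
    · rw [← zpow_natCast]
      have : u ^ (-(d.natAbs : ℤ)) = 1 := by rw [← h]; exact hu
      rw [zpow_neg] at this
      rw [← inv_inv (u ^ (d.natAbs : ℤ)), this, inv_one]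
  have : (u : k) ^ d.natAbs = 1 := by
    rw [← Units.val_pow_eq_pow_val, hnat, Units.val_one]
  simp [Polynomial.IsRoot, this]

lemma exists_unit_zpow_injOn [Infinite k] (s : Finset ℤ) :
    ∃ u : kˣ, ∀ a ∈ s, ∀ b ∈ s, u ^ a = u ^ b → a = b := by
  classical
  set B : Set kˣ := ⋃ p ∈ ((s ×ˢ s).filter fun p => p.1 ≠ p.2), {u : kˣ | u ^ (p.1 - p.2) = 1}
  have hB : B.Finite := by
    apply Set.Finite.biUnion (Finset.finite_toSet _)
    rintro ⟨a, b⟩ hp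
    simp only [Finset.coe_filter, Set.mem_setOf_eq, Finset.mem_filter, Finset.mem_product] at hp
    exact finite_zpow_eq_one _ (sub_ne_zero_of_ne hp.2)
  obtain ⟨u, hu⟩ := exists_unit_notMem B hB
  refine ⟨u, fun a ha b hb hab => ?_⟩
  by_contra hne
  apply hu
  have hmem : ((a, b) : ℤ × ℤ) ∈ (s ×ˢ s).filter fun p => p.1 ≠ p.2 :=
    Finset.mem_filter.mpr ⟨Finset.mem_product.mpr ⟨ha, hb⟩, hne⟩
  have : u ∈ {u : kˣ | u ^ (a - b) = 1} := by
    simp only [Set.mem_setOf_eq, zpow_sub, hab, mul_inv_cancel]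
  exact Set.mem_biUnion hmem this

end helpers2

section fin

variable {k : Type*} [Field k] [IsAlgClosed k]
    {V : Type*} [AddCommGroup V] [Module k V] [FiniteDimensional k V]
    {n : ℕ} (A : (Fin n → kˣ) →* (Module.End k V)ˣ)

lemma finite_ne_bot_weightSpace : {χ : Fin n → ℤ | weightSpace A χ ≠ ⊥}.Finite := by
  classical
  have hcoord : ∀ i : Fin n,
      {m : ℤ | ∃ χ : Fin n → ℤ, weightSpace A χ ≠ ⊥ ∧ χ i = m}.Finite := by
    intro i
    by_contra hfin
    have hinf : {m : ℤ | ∃ χ : Fin n → ℤ, weightSpace A χ ≠ ⊥ ∧ χ i = m}.Infinite := hfin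
    obtain ⟨t, hts, htc⟩ := hinf.exists_subset_card_eq (Module.finrank k V + 1)
    choose χf hχf1 hχf2 using fun (m : {m // m ∈ t}) => hts m.2
    obtain ⟨u, hu⟩ := exists_unit_zpow_injOn (k := k) t
    set tv : Fin n → kˣ := fun j => if j = i then u else 1 with htv
    have hprod : ∀ χ : Fin n → ℤ, (∏ j, tv j ^ χ j) = u ^ χ i := by
      intro χ
      have h1 : ∀ j, tv j ^ χ j = if j = i then u ^ χ j else 1 := by
        intro j
        by_cases hj : j = i <;> simp [htv, hj]
      rw [Finset.prod_congr rfl fun j _ => h1 j, Finset.prod_ite_eq' Finset.univ i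
        (fun j => u ^ χ j)]
      simp
    have hsub : ∀ m : {m // m ∈ t},
        Module.End.eigenspace (A tv : Module.End k V) ((u ^ (m : ℤ) : kˣ) : k) ≠ ⊥ := by
      intro m
      have h1 : weightSpace A (χf m) ≤
          Module.End.eigenspace (A tv : Module.End k V) ((u ^ (m : ℤ) : kˣ) : k) := by
        have h2 := iInf_le (fun s : Fin n → kˣ =>
          Module.End.eigenspace (A s : Module.End k V)
            ((∏ j, (s j) ^ (χf m j) : kˣ) : k)) tv
        rwa [hprod (χf m), hχf2 m] at h2
      intro hbot
      exact hχf1 m (le_bot_iff.mp (hbot ▸ h1))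
    haveI := (Module.End.eigenspaces_iSupIndep
      (A tv : Module.End k V)).fintypeNeBotOfFiniteDimensional
    have hcard := (Module.End.eigenspaces_iSupIndep
      (A tv : Module.End k V)).subtype_ne_bot_le_finrank
    have ginj : Function.Injective (fun m : {m // m ∈ t} =>
        (⟨((u ^ (m : ℤ) : kˣ) : k), hsub m⟩ :
          {c : k // Module.End.eigenspace (A tv : Module.End k V) c ≠ ⊥})) := by
      intro m m' h
      have h2 : ((u ^ (m : ℤ) : kˣ) : k) = ((u ^ (m' : ℤ) : kˣ) : k) := congrArg Subtype.val h
      exact Subtype.ext (hu _ m.2 _ m'.2 (Units.ext h2))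
    have := Fintype.card_le_of_injective _ ginj
    rw [Fintype.card_coe, htc] at this
    omega
  have hsub : {χ : Fin n → ℤ | weightSpace A χ ≠ ⊥} ⊆
      Set.pi Set.univ (fun i => {m : ℤ | ∃ χ : Fin n → ℤ, weightSpace A χ ≠ ⊥ ∧ χ i = m}) :=
    fun χ hχ i _ => ⟨χ, hχ, rfl⟩
  exact (Set.Finite.pi fun i => hcoord i).subset hsub

omit [IsAlgClosed k] in
lemma finite_ne_bot_unit_eigen (σ : (Module.End k V)ˣ) :
    {c : kˣ | Module.End.eigenspace (σ : Module.End k V) (c : k) ≠ ⊥}.Finite := by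
  haveI := (Module.End.eigenspaces_iSupIndep
    (σ : Module.End k V)).fintypeNeBotOfFiniteDimensional
  have h0 : {c : k | Module.End.eigenspace (σ : Module.End k V) c ≠ ⊥}.Finite := by
    have : Finite {c : k // Module.End.eigenspace (σ : Module.End k V) c ≠ ⊥} :=
      Finite.of_fintype _
    exact Set.finite_coe_iff.mp this
  exact h0.preimage (Units.val_injective.injOn)

end fin

/-- Lemma 1.1, genericity form: there is a finite set `F` of pairs `(m, d)` with `m` a
nonzero character and `d` a unit, such that every `z` in the torus avoiding the finitely
many "subvarieties" `{z : ∏ i, (z i) ^ (m i) = d}` has the property that any subspace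
invariant under `σ ∘ A z` is invariant under `σ` and under the whole torus action. -/
theorem rigid_strata_lemma_1_1_genericity
    {k : Type*} [Field k] [IsAlgClosed k]
    {V : Type*} [AddCommGroup V] [Module k V] [FiniteDimensional k V]
    (n : ℕ) (A : (Fin n → kˣ) →* (Module.End k V)ˣ)
    (hA : (⨆ χ : Fin n → ℤ, weightSpace A χ) = ⊤)
    (σ : (Module.End k V)ˣ)
    (hσ : (⨆ c : k, Module.End.eigenspace (σ : Module.End k V) c) = ⊤)
    (hcomm : ∀ t : Fin n → kˣ,
      (σ : Module.End k V) * (A t : Module.End k V)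
        = (A t : Module.End k V) * (σ : Module.End k V)) :
    ∃ F : Finset ((Fin n → ℤ) × kˣ),
      (∀ p ∈ F, p.1 ≠ 0) ∧
      ∀ z : Fin n → kˣ, (∀ p ∈ F, (∏ i, (z i) ^ (p.1 i)) ≠ p.2) →
        ∀ V' : Submodule k V,
          Submodule.map ((σ : Module.End k V) * (A z : Module.End k V)) V' = V' →
            Submodule.map (σ : Module.End k V) V' = V' ∧
            ∀ t : Fin n → kˣ, Submodule.map (A t : Module.End k V) V' = V' := by

  classical
  set E := fun (p : (Fin n → ℤ) × kˣ) =>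
    weightSpace A p.1 ⊓ Module.End.eigenspace (σ : Module.End k V) (p.2 : k) with hE
  have hSfin : {p : (Fin n → ℤ) × kˣ | E p ≠ ⊥}.Finite := by
    apply ((finite_ne_bot_weightSpace A).prod (finite_ne_bot_unit_eigen σ)).subset
    rintro ⟨χ, c⟩ hp
    constructor
    · intro h
      exact hp (le_bot_iff.mp (h ▸ (inf_le_left :
        E (χ, c) ≤ weightSpace A χ)))
    · intro h
      exact hp (le_bot_iff.mp (h ▸ (inf_le_right :
        E (χ, c) ≤ Module.End.eigenspace (σ : Module.End k V) (c : k))))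
  set Sfin := hSfin.toFinset with hSfinDef
  refine ⟨Finset.image
      (fun q : ((Fin n → ℤ) × kˣ) × ((Fin n → ℤ) × kˣ) => (q.1.1 - q.2.1, q.2.2 * q.1.2⁻¹))
      ((Sfin ×ˢ Sfin).filter fun q => q.1.1 ≠ q.2.1), ?_, ?_⟩
  · rintro ⟨m, d⟩ hF
    obtain ⟨q, hq, heq⟩ := Finset.mem_image.mp hF
    obtain ⟨-, hne⟩ := Finset.mem_filter.mp hq
    have : m = q.1.1 - q.2.1 := ((Prod.mk.injEq _ _ _ _).mp heq).1.symm
    rw [this]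
    exact sub_ne_zero_of_ne hne
  intro z hz V' hV'
  set τ : Module.End k V := (σ : Module.End k V) * (A z : Module.End k V) with hτ
  have hτV' : ∀ x ∈ V', τ x ∈ V' := fun x hx => hV' ▸ Submodule.mem_map_of_mem hx
  have hW_A : ∀ (χ : Fin n → ℤ) (t : Fin n → kˣ), ∀ x ∈ weightSpace A χ,
      (A t : Module.End k V) x = ((∏ i, t i ^ χ i : kˣ) : k) • x := fun χ t x hx =>
    Module.End.mem_eigenspace_iff.mp ((Submodule.mem_iInf _).mp hx t)
  have hσ_eig : ∀ (c : k), ∀ x ∈ Module.End.eigenspace (σ : Module.End k V) c,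
      (σ : Module.End k V) x = c • x := fun c x hx => Module.End.mem_eigenspace_iff.mp hx
  -- σ preserves weight spaces
  have hσinv : ∀ χ : Fin n → ℤ, ∀ x ∈ weightSpace A χ,
      (σ : Module.End k V) x ∈ weightSpace A χ := by
    intro χ x hx
    refine (Submodule.mem_iInf _).mpr fun t => Module.End.mem_eigenspace_iff.mpr ?_
    have h1 : (A t : Module.End k V) ((σ : Module.End k V) x)
        = (σ : Module.End k V) ((A t : Module.End k V) x) := by
      rw [← Module.End.mul_apply, ← hcomm t, Module.End.mul_apply]
    rw [h1, hW_A χ t x hx, map_smul]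
  -- the whole space decomposes into the nonzero joint pieces
  have htop : (⨆ p : {p // p ∈ Sfin}, E ↑p) = ⊤ := by
    rw [eq_top_iff, ← hA]
    apply iSup_le
    intro χ
    have hdec : weightSpace A χ
        = ⨆ c : k, weightSpace A χ ⊓ Module.End.eigenspace (σ : Module.End k V) c :=
      Submodule.eq_iSup_inf_genEigenspace 1 (hσinv χ) hσ
    rw [hdec]
    apply iSup_le
    intro c
    by_cases hc0 : c = 0
    · have hker : Module.End.eigenspace (σ : Module.End k V) c = ⊥ := by
        rw [hc0, Module.End.eigenspace_zero]
        rw [LinearMap.ker_eq_bot]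
        intro x y hxy
        have h1 := congrArg (fun w => ((σ⁻¹ : (Module.End k V)ˣ) : Module.End k V) w) hxy
        simpa only [← Module.End.mul_apply, Units.inv_mul, Module.End.one_apply] using h1
      rw [hker, inf_bot_eq]
      exact bot_le
    · have hEc : weightSpace A χ ⊓ Module.End.eigenspace (σ : Module.End k V) c
          = E (χ, Units.mk0 c hc0) := rfl
      rw [hEc]
      by_cases hmem : (χ, Units.mk0 c hc0) ∈ Sfin
      · exact le_iSup (fun p : {p // p ∈ Sfin} => E ↑p) ⟨(χ, Units.mk0 c hc0), hmem⟩
      · have hbot : E (χ, Units.mk0 c hc0) = ⊥ :=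
          not_not.mp (fun h => hmem (hSfin.mem_toFinset.mpr h))
        rw [hbot]
        exact bot_le
  -- the scalar by which τ acts on each piece
  set μ : {p // p ∈ Sfin} → k :=
    fun p => ((∏ i, z i ^ (p.1.1 i) : kˣ) : k) * ((p.1.2 : kˣ) : k) with hμdef
  have hWμ : ∀ p : {p // p ∈ Sfin}, ∀ x ∈ E ↑p, τ x = μ p • x := by
    intro p x hx
    obtain ⟨hx1, hx2⟩ := Submodule.mem_inf.mp hx
    rw [hτ, Module.End.mul_apply, hW_A _ z x hx1, map_smul, hσ_eig _ x hx2, smul_smul]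
  have hμinj : Function.Injective μ := by
    intro p q h
    by_cases h1 : p.1.1 = q.1.1
    · have hPz : ((∏ i, z i ^ (p.1.1 i) : kˣ) : k) = ((∏ i, z i ^ (q.1.1 i) : kˣ) : k) := by
        rw [h1]
      rw [hμdef] at h
      simp only at h
      rw [hPz] at h
      have hc := mul_left_cancel₀ (Units.ne_zero _) h
      exact Subtype.ext (Prod.ext h1 (Units.ext hc))
    · exfalso
      have hunits : (∏ i, z i ^ (p.1.1 i) : kˣ) * p.1.2
          = (∏ i, z i ^ (q.1.1 i) : kˣ) * q.1.2 := by
        apply Units.ext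
        rw [Units.val_mul, Units.val_mul]
        exact h
      have hFmem : (p.1.1 - q.1.1, q.1.2 * p.1.2⁻¹) ∈ Finset.image
          (fun q : ((Fin n → ℤ) × kˣ) × ((Fin n → ℤ) × kˣ) => (q.1.1 - q.2.1, q.2.2 * q.1.2⁻¹))
          ((Sfin ×ˢ Sfin).filter fun q => q.1.1 ≠ q.2.1) :=
        Finset.mem_image.mpr ⟨(p.1, q.1),
          Finset.mem_filter.mpr ⟨Finset.mem_product.mpr ⟨p.2, q.2⟩, h1⟩, rfl⟩
      apply hz _ hFmem
      show (∏ i, z i ^ ((p.1.1 - q.1.1) i)) = q.1.2 * p.1.2⁻¹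
      have hsplit : (∏ i, z i ^ ((p.1.1 - q.1.1) i))
          = (∏ i, z i ^ (p.1.1 i)) * (∏ i, z i ^ (q.1.1 i))⁻¹ := by
        rw [← Finset.prod_inv_distrib, ← Finset.prod_mul_distrib]
        refine Finset.prod_congr rfl fun i _ => ?_
        rw [Pi.sub_apply, zpow_sub]
      rw [hsplit]
      calc (∏ i, z i ^ (p.1.1 i)) * (∏ i, z i ^ (q.1.1 i))⁻¹
          = ((∏ i, z i ^ (p.1.1 i)) * p.1.2) * (p.1.2⁻¹ * (∏ i, z i ^ (q.1.1 i))⁻¹) := by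
            group
        _ = ((∏ i, z i ^ (q.1.1 i)) * q.1.2) * (p.1.2⁻¹ * (∏ i, z i ^ (q.1.1 i))⁻¹) := by
            rw [hunits]
        _ = q.1.2 * p.1.2⁻¹ := by
            rw [mul_comm p.1.2⁻¹ (∏ i, z i ^ (q.1.1 i))⁻¹,
              mul_comm (∏ i, z i ^ (q.1.1 i)) q.1.2]
            group
  -- decompose V'
  have hVdec : V' = ⨆ p : {p // p ∈ Sfin}, (V' ⊓ E ↑p) := by
    apply le_antisymm
    · intro x hx
      refine mem_iSup_inf_of_invariant τ (fun p : {p // p ∈ Sfin} => E ↑p) μ hμinj hWμ V' hτV' x hx ?_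
      rw [htop]
      exact Submodule.mem_top
    · exact iSup_le fun p => inf_le_left
  have hconc : ∀ (f : Module.End k V) (c : {p // p ∈ Sfin} → kˣ),
      (∀ p : {p // p ∈ Sfin}, ∀ x ∈ E ↑p, f x = ((c p : kˣ) : k) • x) →
      Submodule.map f V' = V' := by
    intro f c hf
    conv_lhs => rw [hVdec]
    rw [Submodule.map_iSup]
    have hcongr := iSup_congr fun p : {p // p ∈ Sfin} =>
      map_eq_self_of_scalar f (V' ⊓ E ↑p) ((c p : kˣ) : k)
        (Units.ne_zero _) (fun x hx => hf p x (Submodule.mem_inf.mp hx).2)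
    rw [hcongr]
    exact hVdec.symm
  constructor
  · exact hconc (σ : Module.End k V) (fun p => p.1.2)
      (fun p x hx => hσ_eig _ x (Submodule.mem_inf.mp hx).2)
  · intro t
    exact hconc (A t : Module.End k V) (fun p => (∏ i, t i ^ (p.1.1 i) : kˣ))
      (fun p x hx => hW_A _ t x (Submodule.mem_inf.mp hx).1)
end

section
/- Key step in the proof of Lemma 1.1. Let k be an algebraically closed field, V a finite-dimensional k-vector space, n a natural number, A : (Fin n → kˣ) →* GL(V) a rational representation of the torus T = (Fin n → kˣ), and σ a diagonalizable linear automorphism of V with σ ∘ A(t) = A(t) ∘ σ for all t ∈ T. Suppose z ∈ T satisfies the separation condition: for all c, c' ∈ k and all characters χ, χ' : Fin n → ℤ such that the intersection of the σ-eigenspace for c with the weight space V^χ is nonzero and the intersection of the σ-eigenspace for c' with the weight space V^{χ'} is nonzero, the equality c · χ(z) = c' · χ'(z) in k implies c = c' and χ = χ'. Then for every k-subspace V' of V with (σ ∘ A(z))(V') = V', one has σ(V') = V' and A(t)(V') = V' for all t ∈ T. -/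
namespace Module.End

lemma eigenspace_inf_le_eigenspace_mul {R M : Type*} [CommRing R] [AddCommGroup M] [Module R M]
    {f g : End R M} {a b : R} :
    f.eigenspace a ⊓ g.eigenspace b ≤ (f * g).eigenspace (a * b) := by
  rintro v ⟨hf, hg⟩
  rw [SetLike.mem_coe, mem_eigenspace_iff] at hf hg
  rw [mem_eigenspace_iff, mul_apply, hg, map_smul, hf, smul_smul, mul_comm]

variable {K V : Type*} [Field K] [AddCommGroup V] [Module K V]

section Decomposition

variable {ι : Type*} {E : ι → Submodule K V} {f : End K V} {μ : ι → K}

lemma iSup_eigenspace_eq_top_of_le (hE : ⨆ i, E i = ⊤) (hEμ : ∀ i, E i ≤ f.eigenspace (μ i)) :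
    ⨆ a, f.eigenspace a = ⊤ :=
  top_unique <| hE ▸ iSup_mono' fun i => ⟨μ i, hEμ i⟩

lemma eigenspace_le_iSup_of_iSup_eq_top (hE : ⨆ i, E i = ⊤)
    (hEμ : ∀ i, E i ≤ f.eigenspace (μ i)) (a : K) :
    f.eigenspace a ≤ ⨆ (i) (_ : μ i = a), E i := by
  set X := ⨆ (i) (_ : μ i = a), E i
  set Y := ⨆ (i) (_ : ¬μ i = a), E i
  have hX : X ≤ f.eigenspace a := iSup₂_le fun i hi => hi ▸ hEμ i
  have hY : Y ⊓ f.eigenspace a = ⊥ := by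
    refine le_bot_iff.mp <| le_trans (inf_le_inf_right _ ?_)
      (f.eigenspaces_iSupIndep a).symm.eq_bot.le
    exact iSup₂_le fun i hi => le_iSup₂_of_le (μ i) hi (hEμ i)
  calc f.eigenspace a = (X ⊔ Y) ⊓ f.eigenspace a := by rw [← iSup_split, hE, top_inf_eq]
    _ = X ⊔ Y ⊓ f.eigenspace a := sup_inf_assoc_of_le _ hX
    _ ≤ X := by rw [hY, sup_bot_eq]

lemma exists_eigenspace_le_of_injOn [Nonempty ι] (hE : ⨆ i, E i = ⊤)
    (hEμ : ∀ i, E i ≤ f.eigenspace (μ i)) (hμ : Set.InjOn μ {i | E i ≠ ⊥}) (a : K) :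
    ∃ i, f.eigenspace a ≤ E i := by
  by_cases h : ∃ i, E i ≠ ⊥ ∧ μ i = a
  · obtain ⟨i, hi, rfl⟩ := h
    refine ⟨i, (eigenspace_le_iSup_of_iSup_eq_top hE hEμ _).trans (iSup₂_le fun j hj => ?_)⟩
    by_cases hj' : E j = ⊥
    · exact hj' ▸ bot_le
    · exact hμ hj' hi hj ▸ le_rfl
  · push Not at h
    refine ⟨Classical.arbitrary ι, (eigenspace_le_iSup_of_iSup_eq_top hE hEμ a).trans ?_⟩
    exact iSup₂_le fun j hj => (not_ne_iff.mp fun hj' => h j hj' hj).le.trans bot_le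

end Decomposition

variable [FiniteDimensional K V]

lemma iSup_eigenspace_inf_eq_top {ι : Type*} {W : ι → Submodule K V} (hW : ⨆ i, W i = ⊤)
    {f : End K V} (hf : ⨆ a, f.eigenspace a = ⊤) (hWf : ∀ i, ∀ x ∈ W i, f x ∈ W i) :
    ⨆ p : K × ι, f.eigenspace p.1 ⊓ W p.2 = ⊤ := by
  refine top_unique <| hW ▸ iSup_le fun i => ?_
  refine (Submodule.eq_iSup_inf_genEigenspace 1 (hWf i) hf).le.trans (iSup_le fun a => ?_)
  exact le_iSup_of_le (a, i) (inf_comm _ _).le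

end Module.End

namespace Submodule

open Module.End

variable {K V : Type*} [Field K] [AddCommGroup V] [Module K V]

lemma map_eq_self_of_le_eigenspace {g : Module.End K V} (hg : Function.Injective g)
    {U : Submodule K V} {c : K} (hU : U ≤ g.eigenspace c) : U.map g = U := by
  by_cases hc : c = 0
  · rw [hc, eigenspace_zero, LinearMap.ker_eq_bot.mpr hg, le_bot_iff] at hU
    rw [hU, map_bot]
  refine le_antisymm (map_le_iff_le_comap.mpr fun u hu => ?_) fun u hu => ?_
  · rw [mem_comap, mem_eigenspace_iff.mp (hU hu)]
    exact U.smul_mem c hu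
  · refine ⟨c⁻¹ • u, U.smul_mem _ hu, ?_⟩
    rw [map_smul, mem_eigenspace_iff.mp (hU hu), smul_smul, inv_mul_cancel₀ hc, one_smul]

lemma map_eq_self_of_forall_eigenspace_le [FiniteDimensional K V] {f g : Module.End K V}
    (hf : ⨆ a, f.eigenspace a = ⊤) {U : Submodule K V} (hU : ∀ x ∈ U, f x ∈ U)
    (hg : Function.Injective g) (hfg : ∀ a, ∃ b, f.eigenspace a ≤ g.eigenspace b) :
    U.map g = U := by
  rw [eq_iSup_inf_genEigenspace 1 hU hf, map_iSup]
  refine iSup_congr fun a => ?_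
  obtain ⟨b, hb⟩ := hfg a
  exact map_eq_self_of_le_eigenspace hg (inf_le_right.trans hb)

end Submodule

section WeightSpace

variable {k V : Type*} [Field k] [AddCommGroup V] [Module k V] {n : ℕ}
  (A : (Fin n → kˣ) →* (Module.End k V)ˣ) (χ : Fin n → ℤ)

lemma weightSpace_le_eigenspace (t : Fin n → kˣ) :
    weightSpace A χ ≤ (A t : Module.End k V).eigenspace ((∏ i, (t i) ^ (χ i) : kˣ) : k) :=
  iInf_le _ t

lemma mapsTo_weightSpace_of_commute {g : Module.End k V}
    (hg : ∀ t, Commute (A t : Module.End k V) g) :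
    ∀ x ∈ weightSpace A χ, g x ∈ weightSpace A χ := by
  simp only [weightSpace, Submodule.mem_iInf]
  exact fun x hx t => Module.End.mapsTo_genEigenspace_of_comm (hg t) _ 1 (hx t)

end WeightSpace

theorem rigid_strata_lemma_1_1_key_step_general
    {k : Type*} [Field k]
    {V : Type*} [AddCommGroup V] [Module k V] [FiniteDimensional k V]
    (n : ℕ) (A : (Fin n → kˣ) →* (Module.End k V)ˣ)
    (hA : (⨆ χ : Fin n → ℤ, weightSpace A χ) = ⊤)
    (σ : (Module.End k V)ˣ)
    (hσ : (⨆ c : k, Module.End.eigenspace (σ : Module.End k V) c) = ⊤)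
    (hcomm : ∀ t : Fin n → kˣ,
      (σ : Module.End k V) * (A t : Module.End k V)
        = (A t : Module.End k V) * (σ : Module.End k V))
    (z : Fin n → kˣ)
    (hz : ∀ (c c' : k) (χ χ' : Fin n → ℤ),
      Module.End.eigenspace (σ : Module.End k V) c ⊓ weightSpace A χ ≠ ⊥ →
      Module.End.eigenspace (σ : Module.End k V) c' ⊓ weightSpace A χ' ≠ ⊥ →
      c * ((∏ i, (z i) ^ (χ i) : kˣ) : k) = c' * ((∏ i, (z i) ^ (χ' i) : kˣ) : k) →
      c = c' ∧ χ = χ') :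
    ∀ V' : Submodule k V,
      Submodule.map ((σ : Module.End k V) * (A z : Module.End k V)) V' = V' →
        Submodule.map (σ : Module.End k V) V' = V' ∧
        ∀ t : Fin n → kˣ, Submodule.map (A t : Module.End k V) V' = V' := by
  intro V' hV'
  set τ := (σ : Module.End k V) * (A z : Module.End k V)
  set E : k × (Fin n → ℤ) → Submodule k V := fun p =>
    Module.End.eigenspace (σ : Module.End k V) p.1 ⊓ weightSpace A p.2
  have hE : ⨆ p, E p = ⊤ := Module.End.iSup_eigenspace_inf_eq_top hA hσ fun χ =>
    mapsTo_weightSpace_of_commute A χ fun t => (hcomm t).symm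
  have hEτ : ∀ p, E p ≤ τ.eigenspace (p.1 * ((∏ i, (z i) ^ (p.2 i) : kˣ) : k)) := fun p =>
    (inf_le_inf_left _ (weightSpace_le_eigenspace A p.2 z)).trans
      Module.End.eigenspace_inf_le_eigenspace_mul
  have hτE : ∀ a, ∃ p, τ.eigenspace a ≤ E p :=
    Module.End.exists_eigenspace_le_of_injOn hE hEτ fun p hp q hq h =>
      Prod.ext_iff.mpr (hz _ _ _ _ hp hq h)
  have hτ := Module.End.iSup_eigenspace_eq_top_of_le hE hEτ
  have hV'τ : ∀ x ∈ V', τ x ∈ V' := fun x hx => hV' ▸ Submodule.mem_map_of_mem hx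
  refine ⟨Submodule.map_eq_self_of_forall_eigenspace_le hτ hV'τ
      ((Module.End.isUnit_iff _).mp σ.isUnit).injective
      fun a => (hτE a).imp' Prod.fst fun p hp => hp.trans inf_le_left, fun t => ?_⟩
  refine Submodule.map_eq_self_of_forall_eigenspace_le hτ hV'τ
    ((Module.End.isUnit_iff _).mp (A t).isUnit).injective fun a => ?_
  obtain ⟨p, hp⟩ := hτE a
  exact ⟨_, hp.trans (inf_le_right.trans (weightSpace_le_eigenspace A p.2 t))⟩

/-- Key step in the proof of Lemma 1.1: if `z` separates the pairs `(c, χ)` occurring in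
the joint eigenspace decomposition of `σ` and the torus action (i.e. `c • χ(z)` determines
`(c, χ)` whenever the corresponding joint eigenspace is nonzero), then every subspace
invariant under `σ ∘ A z` is invariant under `σ` and under the whole torus action. -/
theorem rigid_strata_lemma_1_1_key_step
    {k : Type*} [Field k] [IsAlgClosed k]
    {V : Type*} [AddCommGroup V] [Module k V] [FiniteDimensional k V]
    (n : ℕ) (A : (Fin n → kˣ) →* (Module.End k V)ˣ)
    (hA : (⨆ χ : Fin n → ℤ, weightSpace A χ) = ⊤)
    (σ : (Module.End k V)ˣ)
    (hσ : (⨆ c : k, Module.End.eigenspace (σ : Module.End k V) c) = ⊤)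
    (hcomm : ∀ t : Fin n → kˣ,
      (σ : Module.End k V) * (A t : Module.End k V)
        = (A t : Module.End k V) * (σ : Module.End k V))
    (z : Fin n → kˣ)
    (hz : ∀ (c c' : k) (χ χ' : Fin n → ℤ),
      Module.End.eigenspace (σ : Module.End k V) c ⊓ weightSpace A χ ≠ ⊥ →
      Module.End.eigenspace (σ : Module.End k V) c' ⊓ weightSpace A χ' ≠ ⊥ →
      c * ((∏ i, (z i) ^ (χ i) : kˣ) : k) = c' * ((∏ i, (z i) ^ (χ' i) : kˣ) : k) →
      c = c' ∧ χ = χ') :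
    ∀ V' : Submodule k V,
      Submodule.map ((σ : Module.End k V) * (A z : Module.End k V)) V' = V' →
        Submodule.map (σ : Module.End k V) V' = V' ∧
        ∀ t : Fin n → kˣ, Submodule.map (A t : Module.End k V) V' = V' :=
  rigid_strata_lemma_1_1_key_step_general n A hA σ hσ hcomm z hz
end

section
/- Eigenspaces of a product of commuting diagonalizable operators (used in the proof of Lemma 1.1). Let k be a field, V a finite-dimensional k-vector space, and f, g : V →ₗ[k] V two commuting diagonalizable endomorphisms. Then for every a ∈ k, the eigenspace of f ∘ g for the eigenvalue a equals the supremum, over all pairs (c, d) ∈ k × k with c * d = a, of eigenspace(f, c) ⊓ eigenspace(g, d). -/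
open Polynomial

/-- A diagonalizable endomorphism (in finite dimension) is finitely semisimple. -/
private lemma diag_isFinitelySemisimple
    {k : Type*} [Field k] {V : Type*} [AddCommGroup V] [Module k V]
    [FiniteDimensional k V] (f : V →ₗ[k] V)
    (hf : (⨆ c : k, Module.End.eigenspace f c) = ⊤) :
    Module.End.IsFinitelySemisimple f := by
  classical
  set s : Finset k := (minpoly k f).roots.toFinset with hs
  set P : k[X] := ∏ c ∈ s, (X - C c) with hP
  have hsq : Squarefree P := by
    apply Polynomial.Separable.squarefree
    exact (Polynomial.separable_prod_X_sub_C_iff' (f := fun c : k => c)).2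
      (fun x _ y _ hxy => hxy)
  have hP0 : Polynomial.aeval f P = 0 := by
    refine LinearMap.ext fun v => ?_
    have hv : v ∈ ⨆ c : k, Module.End.eigenspace f c := hf ▸ Submodule.mem_top
    rw [LinearMap.zero_apply]
    refine Submodule.iSup_induction _ (motive := fun v => Polynomial.aeval f P v = 0) hv
      (fun c x hx => ?_) (map_zero _)
      (fun x y hx hy => by
        show Polynomial.aeval f P (x + y) = 0
        rw [map_add, hx, hy, add_zero])
    show Polynomial.aeval f P x = 0
    by_cases hx0 : x = 0
    · simp [hx0]
    have hcs : c ∈ s := by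
      have hev : Module.End.HasEigenvalue f c :=
        Module.End.hasEigenvalue_of_hasEigenvector ⟨hx, hx0⟩
      have hroot : (minpoly k f).IsRoot c := Module.End.hasEigenvalue_iff_isRoot.mp hev
      have hne : minpoly k f ≠ 0 := minpoly.ne_zero_of_finite k f
      rw [hs, Multiset.mem_toFinset, Polynomial.mem_roots hne]
      exact hroot
    have hfac : P = (∏ d ∈ s.erase c, (X - C d)) * (X - C c) :=
      (Finset.prod_erase_mul s _ hcs).symm
    rw [hfac, map_mul, Module.End.mul_apply]
    have hz : (Polynomial.aeval f (X - C c)) x = 0 := by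
      have hxe : f x = c • x := Module.End.mem_eigenspace_iff.mp hx
      simp [sub_eq_zero, hxe, Module.algebraMap_end_apply]
    rw [hz, map_zero]
  exact (Module.End.isSemisimple_of_squarefree_aeval_eq_zero hsq hP0).isFinitelySemisimple

/-- Eigenspaces of a product of commuting diagonalizable operators: for commuting
diagonalizable `f g : V →ₗ[k] V` and any `a ∈ k`, the eigenspace of `f ∘ g` for `a` is
the supremum over pairs `(c, d)` with `c * d = a` of the joint eigenspaces
`eigenspace f c ⊓ eigenspace g d`. -/
theorem rigid_strata_eigenspace_of_product
    {k : Type*} [Field k] {V : Type*} [AddCommGroup V] [Module k V]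
    [FiniteDimensional k V]
    (f g : V →ₗ[k] V) (hfg : f ∘ₗ g = g ∘ₗ f)
    (hf : (⨆ c : k, Module.End.eigenspace f c) = ⊤)
    (hg : (⨆ d : k, Module.End.eigenspace g d) = ⊤) (a : k) :
    Module.End.eigenspace (f ∘ₗ g) a
      = ⨆ cd : k × k, ⨆ _ : cd.1 * cd.2 = a,
          Module.End.eigenspace f cd.1 ⊓ Module.End.eigenspace g cd.2 := by
  set E : k → Submodule k V := fun a' => ⨆ cd : k × k, ⨆ _ : cd.1 * cd.2 = a',
      Module.End.eigenspace f cd.1 ⊓ Module.End.eigenspace g cd.2 with hE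
  -- each joint eigenspace sits in the corresponding eigenspace of f ∘ₗ g
  have hEle : ∀ a', E a' ≤ Module.End.eigenspace (f ∘ₗ g) a' := by
    intro a'
    refine iSup_le fun cd => iSup_le fun hcd v hv => ?_
    obtain ⟨hvf, hvg⟩ := hv
    have h1 : g v = cd.2 • v := Module.End.mem_eigenspace_iff.mp hvg
    have h2 : f v = cd.1 • v := Module.End.mem_eigenspace_iff.mp hvf
    have : (f ∘ₗ g) v = a' • v := by
      rw [LinearMap.comp_apply, h1, map_smul, h2, smul_smul, mul_comm, hcd]
    exact Module.End.mem_eigenspace_iff.mpr this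
  -- semisimplicity: maxGenEigenspace = eigenspace
  have hfs := diag_isFinitelySemisimple f hf
  have hgs := diag_isFinitelySemisimple g hg
  -- simultaneous diagonalization
  have hsup : (⨆ a', E a') = ⊤ := by
    have hfg' : Commute (f : Module.End k V) g := by
      show (f : Module.End k V) * g = g * f
      rw [Module.End.mul_eq_comp, Module.End.mul_eq_comp, hfg]
    have hcomm : Pairwise fun i j : Bool =>
        Commute ((fun b : Bool => bif b then f else g) i)
          ((fun b : Bool => bif b then f else g) j) := by
      intro i j hij
      cases i <;> cases j
      · exact absurd rfl hij
      · exact hfg'.symm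
      · exact hfg'
      · exact absurd rfl hij
    have h' : ∀ i : Bool, ⨆ μ,
        Module.End.maxGenEigenspace ((fun b : Bool => bif b then f else g) i) μ = ⊤ := by
      intro i
      cases i
      · show ⨆ μ, Module.End.maxGenEigenspace g μ = ⊤
        rw [show (⨆ μ, Module.End.maxGenEigenspace g μ)
            = ⨆ μ, Module.End.eigenspace g μ from
            iSup_congr fun μ => hgs.maxGenEigenspace_eq_eigenspace μ]
        exact hg
      · show ⨆ μ, Module.End.maxGenEigenspace f μ = ⊤
        rw [show (⨆ μ, Module.End.maxGenEigenspace f μ)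
            = ⨆ μ, Module.End.eigenspace f μ from
            iSup_congr fun μ => hfs.maxGenEigenspace_eq_eigenspace μ]
        exact hf
    have htop :=
      Module.End.iSup_iInf_maxGenEigenspace_eq_top_of_iSup_maxGenEigenspace_eq_top_of_commute
        (fun b : Bool => bif b then f else g) hcomm h'
    rw [eq_top_iff, ← htop]
    refine iSup_le fun χ => ?_
    have hiInf : (⨅ i : Bool,
        Module.End.maxGenEigenspace ((fun b : Bool => bif b then f else g) i) (χ i))
        = Module.End.eigenspace f (χ true) ⊓ Module.End.eigenspace g (χ false) := by
      rw [iInf_bool_eq]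
      show Module.End.maxGenEigenspace f (χ true) ⊓ Module.End.maxGenEigenspace g (χ false) = _
      rw [hfs.maxGenEigenspace_eq_eigenspace, hgs.maxGenEigenspace_eq_eigenspace]
    rw [hiInf]
    refine le_trans ?_ (le_iSup E (χ true * χ false))
    exact le_iSup_of_le ((χ true, χ false) : k × k) (le_iSup_of_le rfl le_rfl)
  -- finish via modular law and independence of eigenspaces of f ∘ₗ g
  have hEsplit : E a ⊔ (⨆ a' ≠ a, E a') = ⊤ := by
    rw [eq_top_iff, ← hsup]
    refine iSup_le fun a' => ?_
    by_cases h' : a' = a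
    · subst h'; exact le_sup_left
    · exact le_trans (le_iSup₂ (f := fun a' (_ : a' ≠ a) => E a') a' h') le_sup_right
  have hdisj : Disjoint (Module.End.eigenspace (f ∘ₗ g) a) (⨆ a' ≠ a, E a') :=
    ((Module.End.eigenspaces_iSupIndep (f ∘ₗ g : Module.End k V)) a).mono_right
      (iSup_mono fun a' => iSup_mono fun _ => hEle a')
  have hmod : (E a ⊔ ⨆ a' ≠ a, E a') ⊓ Module.End.eigenspace (f ∘ₗ g) a
      = E a ⊔ ((⨆ a' ≠ a, E a') ⊓ Module.End.eigenspace (f ∘ₗ g) a) :=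
    sup_inf_assoc_of_le _ (hEle a)
  have h1 : Module.End.eigenspace (f ∘ₗ g) a
      = (E a ⊔ ⨆ a' ≠ a, E a') ⊓ Module.End.eigenspace (f ∘ₗ g) a := by
    rw [hEsplit, top_inf_eq]
  rw [h1, hmod, inf_comm, disjoint_iff.mp hdisj, sup_bot_eq]
end
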